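/- arXiv:2007.16075 — 5 statements merged into one kernel-verified Lean document; each statement's English description precedes it below -/
import Mathlib

section
/- The map (F, Y) ↦ trace(F · Y^{-1/2} · Fᵀ) is jointly convex on ℝ^{d×d} × S⁺⁺(ℝ^{d×d}), where Y^{-1/2} denotes the inverse square root of the symmetric positive definite matrix Y. -/
/-!
For positive definite `R`, `tr (F R⁻¹ Fᵀ) = max_X (2 tr (X Fᵀ) - tr (X R Xᵀ))`, a maximum of
functions that are affine in `(F, R)` and antitone in `R`. Hence `(F, R) ↦ tr (F R⁻¹ Fᵀ)` is jointly
convex and antitone in `R`, and substituting the operator concave `R = Y^{1/2}` keeps it convex.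
Operator concavity of the square root reduces to its operator monotonicity, since
`a A + b B - (a √A + b √B)² = a b (√A - √B)²` when `a + b = 1`.
-/

open Matrix
open scoped Classical

/-- The inverse square root of a positive definite matrix: the positive semidefinite
square root of its inverse (junk value `0` off the positive definite cone). -/
noncomputable def invSqrt {d : ℕ} (Y : Matrix (Fin d) (Fin d) ℝ) :
    Matrix (Fin d) (Fin d) ℝ :=
  if h : Y.PosDef then
    ((h.inv.posSemidef).1.eigenvectorUnitary : Matrix (Fin d) (Fin d) ℝ) *
      diagonal ((↑) ∘ (√·) ∘ (h.inv.posSemidef).1.eigenvalues) *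
      (star (h.inv.posSemidef).1.eigenvectorUnitary : Matrix (Fin d) (Fin d) ℝ)
  else 0

open scoped MatrixOrder

namespace Matrix

variable {m n : Type*}

lemma convex_setOf_posDef : Convex ℝ {A : Matrix n n ℝ | A.PosDef} :=
  convex_iff_forall_pos.mpr fun _ hA _ hB _ _ ha hb _ => (hA.smul ha).add (hB.smul hb)

variable [Fintype m] [Fintype n] [DecidableEq n]

lemma le_sqrt_of_mul_self_le {S C : Matrix n n ℝ} (hS : 0 ≤ S) (hSC : S * S ≤ C) :
    S ≤ CFC.sqrt C := by
  have hC : 0 ≤ C := (IsSelfAdjoint.of_nonneg hS).mul_self_nonneg.trans hSC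
  set D := CFC.sqrt C
  have hD : D.PosSemidef := (CFC.sqrt_nonneg C).posSemidef
  have hM : (D - S).IsHermitian := hD.1.sub hS.posSemidef.1
  refine hM.posSemidef_iff_eigenvalues_nonneg.mpr fun i => ?_
  -- For an eigenvector `v` of `D - S` with eigenvalue `μ < 0`, `0 ≤ vᵀ (C - S²) v = μ vᵀ (D + S) v`
  -- forces `vᵀ D v = vᵀ S v = 0`, contradicting `vᵀ (D - S) v = μ |v|²`.
  by_contra! hμ
  rw [Pi.zero_apply] at hμ
  set μ := hM.eigenvalues i
  set v : n → ℝ := ⇑(hM.eigenvectorBasis i)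
  have hv : (D - S) *ᵥ v = μ • v := hM.mulVec_eigenvectorBasis i
  have hv0 : v ≠ 0 := fun h =>
    hM.eigenvectorBasis.orthonormal.ne_zero i (by ext j; exact congrFun h j)
  have quad_nonneg {A : Matrix n n ℝ} (hA : A.PosSemidef) : 0 ≤ v ⬝ᵥ A *ᵥ v := by
    simpa only [star_trivial] using hA.dotProduct_mulVec_nonneg v
  have hquad : v ⬝ᵥ (C - S * S) *ᵥ v = μ * (v ⬝ᵥ D *ᵥ v + v ⬝ᵥ S *ᵥ v) := by
    have hsplit : C - S * S = D * (D - S) + (D - S) * S := by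
      rw [← CFC.sqrt_mul_sqrt_self C hC]; noncomm_ring
    have hvecMul : vecMul v (D - S) = μ • v := by
      rw [← mulVec_transpose, ← conjTranspose_eq_transpose_of_trivial, hM.eq, hv]
    rw [hsplit, add_mulVec, dotProduct_add, ← mulVec_mulVec, ← mulVec_mulVec, hv, mulVec_smul,
      dotProduct_mulVec v (D - S), hvecMul]
    simp only [dotProduct_smul, smul_dotProduct, smul_eq_mul]
    ring
  have hsum : v ⬝ᵥ D *ᵥ v + v ⬝ᵥ S *ᵥ v ≤ 0 := by
    nlinarith [quad_nonneg hSC, quad_nonneg hD, quad_nonneg hS.posSemidef]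
  have hdiff : v ⬝ᵥ D *ᵥ v - v ⬝ᵥ S *ᵥ v = μ * (v ⬝ᵥ v) := by
    rw [← dotProduct_sub, ← sub_mulVec, hv, dotProduct_smul, smul_eq_mul]
  have hvv : v ⬝ᵥ v = 0 := by
    have hμvv : μ * (v ⬝ᵥ v) = 0 := by
      linarith [quad_nonneg hD, quad_nonneg hS.posSemidef]
    exact (mul_eq_zero.mp hμvv).resolve_left hμ.ne
  exact hv0 (dotProduct_self_eq_zero.mp hvv)

lemma concaveOn_sqrt : ConcaveOn ℝ (Set.Ici (0 : Matrix n n ℝ)) CFC.sqrt := by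
  refine ⟨convex_Ici 0, fun A hA B hB a b ha hb hab => ?_⟩
  set P := CFC.sqrt A
  set Q := CFC.sqrt B
  refine le_sqrt_of_mul_self_le (add_nonneg (smul_nonneg ha (CFC.sqrt_nonneg A))
    (smul_nonneg hb (CFC.sqrt_nonneg B))) ?_
  have hdefect :
      a • A + b • B - (a • P + b • Q) * (a • P + b • Q) = (a * b) • ((P - Q) * (P - Q)) := by
    obtain rfl : b = 1 - a := by linarith
    rw [← CFC.sqrt_mul_sqrt_self A hA, ← CFC.sqrt_mul_sqrt_self B hB]
    simp only [sub_mul, mul_sub, add_mul, mul_add, smul_mul_assoc, mul_smul_comm]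
    module
  rw [← sub_nonneg, hdefect]
  exact smul_nonneg (mul_nonneg ha hb)
    ((CFC.sqrt_nonneg A).isSelfAdjoint.sub (CFC.sqrt_nonneg B).isSelfAdjoint).mul_self_nonneg

lemma isGreatest_trace_mul_inv_mul_transpose {R : Matrix n n ℝ} (hR : R.PosDef)
    (F : Matrix m n ℝ) :
    IsGreatest (Set.range fun X : Matrix m n ℝ => 2 * (X * Fᵀ).trace - (X * R * Xᵀ).trace)
      (F * R⁻¹ * Fᵀ).trace := by
  have hdet : IsUnit R.det := hR.det_pos.ne'.isUnit
  have hRt : R⁻¹ᵀ = R⁻¹ := by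
    rw [← conjTranspose_eq_transpose_of_trivial, hR.inv.isHermitian.eq]
  refine ⟨⟨F * R⁻¹, ?_⟩, ?_⟩
  · dsimp only
    rw [transpose_mul, hRt, nonsing_inv_mul_cancel_right _ _ hdet, ← Matrix.mul_assoc]
    ring
  · rintro _ ⟨X, rfl⟩
    have hsq := (hR.posSemidef.mul_mul_conjTranspose_same (X - F * R⁻¹)).trace_nonneg
    have hexpand : (X - F * R⁻¹) * R * (X - F * R⁻¹)ᴴ
        = X * R * Xᵀ - X * Fᵀ - (X * Fᵀ)ᵀ + F * R⁻¹ * Fᵀ := by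
      simp only [conjTranspose_eq_transpose_of_trivial, transpose_sub, transpose_mul, hRt,
        transpose_transpose, Matrix.sub_mul, Matrix.mul_sub, nonsing_inv_mul_cancel_right _ _ hdet,
        Matrix.mul_assoc, mul_nonsing_inv_cancel_left _ _ hdet]
      abel
    rw [hexpand, trace_add, trace_sub, trace_sub, trace_transpose] at hsq
    linarith

lemma antitoneOn_trace_mul_inv_mul_transpose (F : Matrix m n ℝ) :
    AntitoneOn (fun R : Matrix n n ℝ => (F * R⁻¹ * Fᵀ).trace) {R | R.PosDef} := by
  intro R hR R' hR' hRR'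
  obtain ⟨⟨X, hX⟩, -⟩ := isGreatest_trace_mul_inv_mul_transpose hR' F
  have hXRX : (X * R * Xᵀ).trace ≤ (X * R' * Xᵀ).trace := by
    have := (hRR'.mul_mul_conjTranspose_same X).trace_nonneg
    rwa [conjTranspose_eq_transpose_of_trivial, Matrix.mul_sub, Matrix.sub_mul, trace_sub,
      sub_nonneg] at this
  calc (F * R'⁻¹ * Fᵀ).trace = 2 * (X * Fᵀ).trace - (X * R' * Xᵀ).trace := hX.symm
    _ ≤ 2 * (X * Fᵀ).trace - (X * R * Xᵀ).trace := by linarith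
    _ ≤ (F * R⁻¹ * Fᵀ).trace := (isGreatest_trace_mul_inv_mul_transpose hR F).2 ⟨X, rfl⟩

lemma convexOn_trace_mul_inv_mul_transpose :
    ConvexOn ℝ {p : Matrix m n ℝ × Matrix n n ℝ | p.2.PosDef}
      (fun p => (p.1 * p.2⁻¹ * p.1ᵀ).trace) := by
  refine ⟨convex_setOf_posDef.linear_preimage (LinearMap.snd ℝ _ _), ?_⟩
  intro p hp q hq a b ha hb hab
  have hR : (a • p.2 + b • q.2).PosDef := convex_setOf_posDef hp hq ha hb hab
  obtain ⟨⟨X, hX⟩, -⟩ := isGreatest_trace_mul_inv_mul_transpose hR (a • p.1 + b • q.1)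
  have bound {r : Matrix m n ℝ × Matrix n n ℝ} (hr : r.2.PosDef) :
      2 * (X * r.1ᵀ).trace - (X * r.2 * Xᵀ).trace ≤ (r.1 * r.2⁻¹ * r.1ᵀ).trace :=
    (isGreatest_trace_mul_inv_mul_transpose hr r.1).2 ⟨X, rfl⟩
  calc ((a • p + b • q).1 * (a • p + b • q).2⁻¹ * (a • p + b • q).1ᵀ).trace
      = a * (2 * (X * p.1ᵀ).trace - (X * p.2 * Xᵀ).trace)
        + b * (2 * (X * q.1ᵀ).trace - (X * q.2 * Xᵀ).trace) := by
        rw [Prod.fst_add, Prod.snd_add, Prod.smul_fst, Prod.smul_snd, Prod.smul_fst,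
          Prod.smul_snd, ← hX]
        simp only [transpose_add, transpose_smul, Matrix.mul_add, Matrix.add_mul,
          Matrix.mul_smul, Matrix.smul_mul, trace_add, trace_smul, smul_eq_mul]
        ring
    _ ≤ a * (p.1 * p.2⁻¹ * p.1ᵀ).trace + b * (q.1 * q.2⁻¹ * q.1ᵀ).trace := by
        gcongr
        exacts [bound hp, bound hq]

end Matrix

lemma invSqrt_eq_inv_sqrt {d : ℕ} {Y : Matrix (Fin d) (Fin d) ℝ} (hY : Y.PosDef) :
    invSqrt Y = (CFC.sqrt Y)⁻¹ := by
  have hY' := hY.inv.posSemidef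
  rw [invSqrt, dif_pos hY, hY.posSemidef.inv_sqrt, CFC.sqrt_eq_cfc, cfc_nnreal_eq_real _ Y⁻¹,
    hY'.1.cfc_eq, IsHermitian.cfc, Unitary.conjStarAlgAut_apply]
  congr 3
  funext i
  simp [Real.coe_sqrt, hY'.eigenvalues_nonneg i]

/-- Lieb-type convexity: `(F, Y) ↦ trace (F * Y^{-1/2} * Fᵀ)` is jointly convex on
`ℝ^{d×d} × S⁺⁺(ℝ^{d×d})`. -/
theorem stmt_3 {d : ℕ} :
    ConvexOn ℝ
      {p : Matrix (Fin d) (Fin d) ℝ × Matrix (Fin d) (Fin d) ℝ | p.2.PosDef}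
      (fun p => (p.1 * invSqrt p.2 * p.1ᵀ).trace) := by
  refine ⟨convex_setOf_posDef.linear_preimage (LinearMap.snd ℝ _ _), ?_⟩
  intro p (hp : p.2.PosDef) q (hq : q.2.PosDef) a b ha hb hab
  have sqrt_posDef {Y : Matrix (Fin d) (Fin d) ℝ} (hY : Y.PosDef) : (CFC.sqrt Y).PosDef :=
    (IsStrictlyPositive.sqrt Y hY.isStrictlyPositive).posDef
  have hpq : (a • p.2 + b • q.2).PosDef := convex_setOf_posDef hp hq ha hb hab
  have hsqrt_le : a • CFC.sqrt p.2 + b • CFC.sqrt q.2 ≤ CFC.sqrt (a • p.2 + b • q.2) :=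
    concaveOn_sqrt.2 hp.posSemidef.nonneg hq.posSemidef.nonneg ha hb hab
  simp only [Prod.fst_add, Prod.snd_add, Prod.smul_fst, Prod.smul_snd, invSqrt_eq_inv_sqrt hp,
    invSqrt_eq_inv_sqrt hq, invSqrt_eq_inv_sqrt hpq]
  calc _ ≤ ((a • p.1 + b • q.1) * (a • CFC.sqrt p.2 + b • CFC.sqrt q.2)⁻¹ *
          (a • p.1 + b • q.1)ᵀ).trace :=
        antitoneOn_trace_mul_inv_mul_transpose _
          (convex_setOf_posDef (sqrt_posDef hp) (sqrt_posDef hq) ha hb hab) (sqrt_posDef hpq)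
          hsqrt_le
    _ ≤ _ := convexOn_trace_mul_inv_mul_transpose.2 (x := (p.1, CFC.sqrt p.2))
          (y := (q.1, CFC.sqrt q.2)) (sqrt_posDef hp) (sqrt_posDef hq) ha hb hab
end

section
/- The function (h, y) ↦ g h⁻¹ + μ h⁻² y⁻⁴ is strictly jointly convex on (0,∞)² for any constants g > 0 and μ > 0, i.e. its Hessian matrix is positive definite at every point. -/
open Set Real

private lemma strictConvexOn_congr {s : Set (ℝ × ℝ)} {f f' : ℝ × ℝ → ℝ}
    (h : Set.EqOn f f' s) (hf : StrictConvexOn ℝ s f) : StrictConvexOn ℝ s f' :=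
  ⟨hf.1, fun x hx y hy hxy a b ha hb hab => by
    rw [← h hx, ← h hy, ← h (hf.1 hx hy ha.le hb.le hab)]
    exact hf.2 hx hy hxy ha hb hab⟩

private lemma aux_L_strict :
    StrictConvexOn ℝ ((Set.Ioi (0 : ℝ)) ×ˢ (Set.Ioi (0 : ℝ)))
      (fun p : ℝ × ℝ => (-2 : ℝ) * Real.log p.1 + (-4 : ℝ) * Real.log p.2) := by
  have hS : Convex ℝ ((Set.Ioi (0 : ℝ)) ×ˢ (Set.Ioi (0 : ℝ))) :=
    (convex_Ioi 0).prod (convex_Ioi 0)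
  refine ⟨hS, fun x hx y hy hxy a b ha hb hab => ?_⟩
  obtain ⟨hx1, hx2⟩ := hx
  obtain ⟨hy1, hy2⟩ := hy
  simp only [Prod.fst_add, Prod.snd_add, Prod.smul_fst, Prod.smul_snd, smul_eq_mul]
  have hcc := strictConcaveOn_log_Ioi.concaveOn
  have h1le : a * Real.log x.1 + b * Real.log y.1 ≤ Real.log (a * x.1 + b * y.1) := by
    simpa [smul_eq_mul] using hcc.2 hx1 hy1 ha.le hb.le hab
  have h2le : a * Real.log x.2 + b * Real.log y.2 ≤ Real.log (a * x.2 + b * y.2) := by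
    simpa [smul_eq_mul] using hcc.2 hx2 hy2 ha.le hb.le hab
  by_cases h1 : x.1 = y.1
  · have h2 : x.2 ≠ y.2 := fun h2 => hxy (Prod.ext h1 h2)
    have h2lt : a * Real.log x.2 + b * Real.log y.2 < Real.log (a * x.2 + b * y.2) := by
      simpa [smul_eq_mul] using strictConcaveOn_log_Ioi.2 hx2 hy2 h2 ha hb hab
    nlinarith
  · have h1lt : a * Real.log x.1 + b * Real.log y.1 < Real.log (a * x.1 + b * y.1) := by
      simpa [smul_eq_mul] using strictConcaveOn_log_Ioi.2 hx1 hy1 h1 ha hb hab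
    nlinarith

private lemma aux_exp_strict {μ : ℝ} (hμ : 0 < μ) {s : Set (ℝ × ℝ)} {L : ℝ × ℝ → ℝ}
    (hL : StrictConvexOn ℝ s L) :
    StrictConvexOn ℝ s (fun p => μ * Real.exp (L p)) := by
  refine ⟨hL.1, fun x hx y hy hxy a b ha hb hab => ?_⟩
  have h1 : L (a • x + b • y) < a * L x + b * L y := by
    simpa [smul_eq_mul] using hL.2 hx hy hxy ha hb hab
  have h2 : Real.exp (L (a • x + b • y)) < Real.exp (a * L x + b * L y) :=
    Real.exp_lt_exp.2 h1
  have h3 : Real.exp (a * L x + b * L y) ≤ a * Real.exp (L x) + b * Real.exp (L y) := by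
    simpa [smul_eq_mul] using convexOn_exp.2 (mem_univ (L x)) (mem_univ (L y)) ha.le hb.le hab
  simp only [smul_eq_mul]
  nlinarith

private lemma aux_inv_convex {g : ℝ} (hg : 0 < g) :
    ConvexOn ℝ ((Set.Ioi (0 : ℝ)) ×ˢ (Set.Ioi (0 : ℝ)))
      (fun p : ℝ × ℝ => g * p.1⁻¹) := by
  refine ⟨(convex_Ioi 0).prod (convex_Ioi 0), fun x hx y hy a b ha hb hab => ?_⟩
  obtain ⟨hx1, -⟩ := hx
  obtain ⟨hy1, -⟩ := hy
  rw [mem_Ioi] at hx1 hy1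
  simp only [Prod.fst_add, Prod.smul_fst, smul_eq_mul]
  have hm : 0 < a * x.1 + b * y.1 := by
    rcases eq_or_lt_of_le ha with h | h
    · have hb1 : b = 1 := by linarith
      simp [← h, hb1, hy1]
    · have : 0 ≤ b * y.1 := mul_nonneg hb hy1.le
      nlinarith
  have key : (a * x.1 + b * y.1)⁻¹ ≤ a * x.1⁻¹ + b * y.1⁻¹ := by
    rw [inv_le_iff_one_le_mul₀ hm]
    have e1 : x.1 * x.1⁻¹ = 1 := mul_inv_cancel₀ (ne_of_gt hx1)
    have e2 : y.1 * y.1⁻¹ = 1 := mul_inv_cancel₀ (ne_of_gt hy1)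
    have h4 : 0 < x.1 * y.1 := mul_pos hx1 hy1
    have h5 : 0 ≤ a * b * (x.1 - y.1)^2 * (x.1⁻¹ * y.1⁻¹) := by positivity
    have key2 : (a * x.1⁻¹ + b * y.1⁻¹) * (a * x.1 + b * y.1)
        = a ^ 2 + b ^ 2 + a * b * ((x.1 - y.1) ^ 2 * (x.1⁻¹ * y.1⁻¹) + 2) := by
      field_simp
      ring
    rw [key2]
    nlinarith [h5]
  nlinarith

/-- The function `(h, y) ↦ g h⁻¹ + μ h⁻² y⁻⁴` is strictly jointly convex on `(0,∞)²`,
for any constants `g > 0` and `μ > 0`. -/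
theorem stmt_7 (g μ : ℝ) (hg : 0 < g) (hμ : 0 < μ) :
    StrictConvexOn ℝ ((Set.Ioi (0 : ℝ)) ×ˢ (Set.Ioi (0 : ℝ)))
      (fun p : ℝ × ℝ => g * p.1⁻¹ + μ * (p.1⁻¹ ^ 2) * (p.2⁻¹ ^ 4)) := by
  have hB := aux_exp_strict hμ aux_L_strict
  have hsum := (aux_inv_convex hg).add_strictConvexOn hB
  refine strictConvexOn_congr (fun p hp => ?_) hsum
  obtain ⟨hp1, hp2⟩ := hp
  rw [mem_Ioi] at hp1 hp2
  have e : Real.exp ((-2 : ℝ) * Real.log p.1 + (-4 : ℝ) * Real.log p.2)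
      = p.1⁻¹ ^ 2 * p.2⁻¹ ^ 4 := by
    rw [Real.exp_add]
    have h1 : (-2 : ℝ) * Real.log p.1 = Real.log (p.1⁻¹ ^ 2) := by
      rw [Real.log_pow, Real.log_inv]; push_cast; ring
    have h2 : (-4 : ℝ) * Real.log p.2 = Real.log (p.2⁻¹ ^ 4) := by
      rw [Real.log_pow, Real.log_inv]; push_cast; ring
    rw [h1, h2, Real.exp_log (by positivity), Real.exp_log (by positivity)]
  simp only [Pi.add_apply]
  rw [e]
  ring
end

section
/- Let λ > 0 and A₀ ∈ S⁺⁺(ℝ^{d×d}). If M(s) is symmetric positive semidefinite for all s, then the solution A(t) = e^{(t₀−t)/λ} A₀ + ∫_{t₀}^t λ⁻¹ e^{(s−t)/λ} M(s) ds of the relaxation ODE remains symmetric positive definite for all t ≥ t₀. -/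
open Matrix

attribute [local instance] Matrix.normedAddCommGroup Matrix.normedSpace

open scoped ComplexOrder

namespace Matrix

variable {n 𝕜 : Type*} [Fintype n] [RCLike 𝕜]

theorem isClosed_setOf_posSemidef : IsClosed {A : Matrix n n 𝕜 | A.PosSemidef} := by
  simp only [posSemidef_iff_dotProduct_mulVec, Set.ofPred_and, Set.ofPred_forall]
  refine .inter (isClosed_eq (by fun_prop) (by fun_prop)) (isClosed_iInter fun x => ?_)
  exact isClosed_le continuous_const (by fun_prop)

open scoped MatrixOrder in
theorem closedIciTopology : ClosedIciTopology (Matrix n n 𝕜) :=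
  ⟨fun B => isClosed_setOf_posSemidef.preimage (continuous_sub_right B)⟩

open scoped MatrixOrder in
theorem PosSemidef.integral {α : Type*} [MeasurableSpace α] {μ : MeasureTheory.Measure α}
    {f : α → Matrix n n 𝕜} (hf : ∀ᵐ x ∂μ, (f x).PosSemidef) : (∫ x, f x ∂μ).PosSemidef :=
  -- `closedIciTopology` is stated for the product topology, which instance search does not
  -- identify with the topology of the local norm `Matrix.normedAddCommGroup`.
  nonneg_iff_posSemidef.mp <| @MeasureTheory.integral_nonneg_of_ae _ _ _ _ _ _ _ _ _
    closedIciTopology _ (hf.mono fun _ => nonneg_iff_posSemidef.mpr)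

theorem PosSemidef.intervalIntegral {f : ℝ → Matrix n n 𝕜} {a b : ℝ} (hab : a ≤ b)
    (hf : ∀ x ∈ Set.Ioc a b, (f x).PosSemidef) : (∫ x in a..b, f x).PosSemidef := by
  rw [intervalIntegral.integral_of_le hab]
  exact PosSemidef.integral <|
    (MeasureTheory.ae_restrict_iff' measurableSet_Ioc).mpr (.of_forall hf)

end Matrix

theorem stmt_10_general {d : ℕ} (lam : ℝ) (hlam : 0 < lam)
    (M : ℝ → Matrix (Fin d) (Fin d) ℝ)
    (hMpsd : ∀ s, (M s).PosSemidef)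
    (t₀ : ℝ) (A₀ : Matrix (Fin d) (Fin d) ℝ) (hA₀ : A₀.PosDef) :
    ∀ t, t₀ ≤ t →
      (Real.exp ((t₀ - t) / lam) • A₀ +
        ∫ s in t₀..t, (lam⁻¹ * Real.exp ((s - t) / lam)) • M s).PosDef := by
  intro t ht
  refine (hA₀.smul (Real.exp_pos _)).add_posSemidef ?_
  exact PosSemidef.intervalIntegral ht fun s _ => (hMpsd s).smul (by positivity)

/-- Positivity preservation: if `A₀` is symmetric positive definite, `lam > 0`, and
`M` is continuous with symmetric positive semidefinite values, then
`A t = e^{(t₀−t)/lam} A₀ + ∫_{t₀}^t lam⁻¹ e^{(s−t)/lam} M s ds` is symmetric positive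
definite for all `t ≥ t₀`. -/
theorem stmt_10 {d : ℕ} (lam : ℝ) (hlam : 0 < lam)
    (M : ℝ → Matrix (Fin d) (Fin d) ℝ) (hM : Continuous M)
    (hMpsd : ∀ s, (M s).PosSemidef)
    (t₀ : ℝ) (A₀ : Matrix (Fin d) (Fin d) ℝ) (hA₀ : A₀.PosDef) :
    ∀ t, t₀ ≤ t →
      (Real.exp ((t₀ - t) / lam) • A₀ +
        ∫ s in t₀..t, (lam⁻¹ * Real.exp ((s - t) / lam)) • M s).PosDef :=
  stmt_10_general lam hlam M hMpsd t₀ A₀ hA₀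
end

section
/- Let c solve c'(t) = −(4/ξ)(K H' c(t) − k_B θ I) along a trajectory with no deformation (L = 0), c(t) symmetric positive definite. Then the free energy F(c) = K H' tr(c) − k_B θ log det(c) is nonincreasing; precisely d/dt F(c(t)) = −(4/ξ) trace((KH' c − k_Bθ I) c⁻¹ (KH' c − k_Bθ I)) ≤ 0. -/
open Matrix

attribute [local instance] Matrix.normedAddCommGroup Matrix.normedSpace

/-!
Differentiating the determinant as a multilinear function of the rows gives Jacobi's formula
`(det c)' = tr (adj c * c')`, hence `(log det c)' = tr (c⁻¹ c')` and, for `A = KH c − kB 1`,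
`F(c)' = tr (A c⁻¹ c')`. Along the flow `c' = −(4/ξ) A` this is `−(4/ξ) tr (A c⁻¹ A)`, and
`A c⁻¹ A = Aᴴ c⁻¹ A` is positive semidefinite because `A` is symmetric and `c⁻¹` is positive
definite.
-/

theorem Matrix.sum_det_updateRow {R n : Type*} [CommRing R] [Fintype n] [DecidableEq n]
    (M X : Matrix n n R) :
    ∑ i, (M.updateRow i (X i)).det = (adjugate M * X).trace := by
  have hrow (i : n) : (M.updateRow i (X i)).det = ∑ j, adjugate M j i * X i j := by
    rw [← cramer_transpose_apply, cramer_eq_adjugate_mulVec, ← adjugate_transpose]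
    rfl
  simp_rw [hrow, trace, diag, mul_apply]
  exact Finset.sum_comm

section Calculus

variable {𝕜 n : Type*} [NontriviallyNormedField 𝕜] [Fintype n]

theorem Matrix.hasDerivAt_trace {c : 𝕜 → Matrix n n 𝕜} {c' : Matrix n n 𝕜} {t : 𝕜}
    (hc : HasDerivAt c c' t) : HasDerivAt (fun s => (c s).trace) c'.trace t :=
  HasDerivAt.fun_sum fun i _ => hasDerivAt_pi.1 (hasDerivAt_pi.1 hc i) i

variable [DecidableEq n]

noncomputable def Matrix.detRowContinuousMultilinear :
    ContinuousMultilinearMap 𝕜 (fun _ : n => n → 𝕜) 𝕜 where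
  toMultilinearMap := (detRowAlternating : (n → 𝕜) [⋀^n]→ₗ[𝕜] 𝕜).toMultilinearMap
  cont := continuous_id.matrix_det

theorem Matrix.hasDerivAt_det {c : 𝕜 → Matrix n n 𝕜} {c' : Matrix n n 𝕜} {t : 𝕜}
    (hc : HasDerivAt c c' t) :
    HasDerivAt (fun s => (c s).det) (adjugate (c t) * c').trace t := by
  have hrows (i : n) : HasFDerivAt (fun s => c s i) ((1 : 𝕜 →L[𝕜] 𝕜).smulRight (c' i)) t :=
    (hasDerivAt_pi.1 hc i).hasFDerivAt
  have h := (HasFDerivAt.multilinear_comp detRowContinuousMultilinear hrows).hasDerivAt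
  rw [_root_.sum_apply] at h
  rw [← sum_det_updateRow]
  refine h.congr_deriv (Finset.sum_congr rfl fun i _ => ?_)
  simp only [ContinuousLinearMap.comp_apply, ContinuousLinearMap.smulRight_apply,
    one_apply_eq_self, one_smul, ContinuousMultilinearMap.toContinuousLinearMap_apply]
  rfl

end Calculus

section Real

variable {n : Type*} [Fintype n] [DecidableEq n]

theorem Matrix.hasDerivAt_log_det {c : ℝ → Matrix n n ℝ} {c' : Matrix n n ℝ} {t : ℝ}
    (hc : HasDerivAt c c' t) (hdet : (c t).det ≠ 0) :
    HasDerivAt (fun s => Real.log (c s).det) ((c t)⁻¹ * c').trace t := by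
  refine ((hasDerivAt_det hc).log hdet).congr_deriv ?_
  rw [inv_def, Ring.inverse_eq_inv', smul_mul, trace_smul, smul_eq_mul]
  field_simp

noncomputable def freeEnergy (KH kB : ℝ) (M : Matrix n n ℝ) : ℝ :=
  KH * M.trace - kB * Real.log M.det

theorem hasDerivAt_freeEnergy (KH kB : ℝ) {c : ℝ → Matrix n n ℝ} {c' : Matrix n n ℝ} {t : ℝ}
    (hc : HasDerivAt c c' t) (hdet : (c t).det ≠ 0) :
    HasDerivAt (fun s => freeEnergy KH kB (c s))
      ((KH • c t - kB • 1) * (c t)⁻¹ * c').trace t := by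
  refine (((hasDerivAt_trace hc).const_mul KH).sub
    ((hasDerivAt_log_det hc hdet).const_mul kB)).congr_deriv ?_
  rw [sub_mul, smul_mul, mul_nonsing_inv _ (isUnit_iff_ne_zero.2 hdet), smul_mul, Matrix.one_mul,
    sub_mul, smul_mul, smul_mul, Matrix.one_mul, trace_sub, trace_smul, trace_smul, smul_eq_mul,
    smul_eq_mul]

theorem Matrix.trace_mul_inv_mul_nonneg {A M : Matrix n n ℝ} (hA : A.IsHermitian)
    (hM : M.PosDef) : 0 ≤ (A * M⁻¹ * A).trace := by
  have h := (hM.inv.posSemidef.conjTranspose_mul_mul_same A).trace_nonneg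
  rwa [hA.eq] at h

end Real

theorem stmt_14_general {d : ℕ} (KH kB ξ : ℝ) (hξ : 0 < ξ)
    (c : ℝ → Matrix (Fin d) (Fin d) ℝ) (hcpos : ∀ s, (c s).PosDef)
    (hc : ∀ s, HasDerivAt c
      (-((4 / ξ) • (KH • c s - kB • (1 : Matrix (Fin d) (Fin d) ℝ)))) s)
    (t : ℝ) :
    HasDerivAt (fun s => KH * (c s).trace - kB * Real.log (c s).det)
      (-(4 / ξ) * ((KH • c t - kB • (1 : Matrix (Fin d) (Fin d) ℝ)) * (c t)⁻¹ *
        (KH • c t - kB • (1 : Matrix (Fin d) (Fin d) ℝ))).trace) t ∧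
    -(4 / ξ) * ((KH • c t - kB • (1 : Matrix (Fin d) (Fin d) ℝ)) * (c t)⁻¹ *
        (KH • c t - kB • (1 : Matrix (Fin d) (Fin d) ℝ))).trace ≤ 0 := by
  have hA : (KH • c t - kB • (1 : Matrix (Fin d) (Fin d) ℝ)).IsHermitian :=
    ((hcpos t).isHermitian.smul (.all KH)).sub (isHermitian_one.smul (.all kB))
  refine ⟨?_, ?_⟩
  · have h := hasDerivAt_freeEnergy KH kB (hc t) (hcpos t).det_pos.ne'
    rwa [Matrix.mul_neg, Matrix.mul_smul, trace_neg, trace_smul, smul_eq_mul, ← neg_mul] at h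
  · exact mul_nonpos_of_nonpos_of_nonneg (by linarith [div_pos four_pos hξ])
      (trace_mul_inv_mul_nonneg hA (hcpos t))

/-- Dissipation identity in the quiescent case: if `c` solves
`c' = −(4/ξ)(KH' c − k_Bθ 1)` with symmetric positive definite values, then the free
energy `F(c) = KH' tr c − k_Bθ log det c` is nonincreasing; precisely
`d/dt F(c t) = −(4/ξ) tr((KH' c − k_Bθ 1) c⁻¹ (KH' c − k_Bθ 1)) ≤ 0`. -/
theorem stmt_14 {d : ℕ} (KH kB ξ : ℝ) (hKH : 0 < KH) (hkB : 0 < kB) (hξ : 0 < ξ)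
    (c : ℝ → Matrix (Fin d) (Fin d) ℝ) (hcpos : ∀ s, (c s).PosDef)
    (hc : ∀ s, HasDerivAt c
      (-((4 / ξ) • (KH • c s - kB • (1 : Matrix (Fin d) (Fin d) ℝ)))) s)
    (t : ℝ) :
    HasDerivAt (fun s => KH * (c s).trace - kB * Real.log (c s).det)
      (-(4 / ξ) * ((KH • c t - kB • (1 : Matrix (Fin d) (Fin d) ℝ)) * (c t)⁻¹ *
        (KH • c t - kB • (1 : Matrix (Fin d) (Fin d) ℝ))).trace) t ∧
    -(4 / ξ) * ((KH • c t - kB • (1 : Matrix (Fin d) (Fin d) ℝ)) * (c t)⁻¹ *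
        (KH • c t - kB • (1 : Matrix (Fin d) (Fin d) ℝ))).trace ≤ 0 :=
  stmt_14_general KH kB ξ hξ c hcpos hc t
end

section
/- Let F : ℝ² → GL₂(ℝ) be a smooth field of invertible 2×2 matrices and H = ĥ/|det F| with constant ĥ > 0, evolving by ∂_t(H F^i_α) + ∂_j(H U^j F^i_α − H F^j_α U^i) = 0 together with ∂_t H + ∂_j(H U^j) = 0 for a smooth velocity field U. If the Piola identities ∂_i(H F^i_α) = 0 hold at t = 0, then they hold for all t ≥ 0. -/
open Matrix

/-- Partial derivative in time of a scalar field on `ℝ × ℝ²`. -/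
noncomputable def pt (f : ℝ → (Fin 2 → ℝ) → ℝ) (t : ℝ) (x : Fin 2 → ℝ) : ℝ :=
  deriv (fun s => f s x) t

/-- Partial derivative in the `j`-th spatial direction of a scalar field on `ℝ × ℝ²`. -/
noncomputable def px (j : Fin 2) (f : ℝ → (Fin 2 → ℝ) → ℝ) (t : ℝ) (x : Fin 2 → ℝ) : ℝ :=
  fderiv ℝ (fun y => f t y) x (Pi.single j 1)

section PiolaAux

/-- The space-time domain. -/
abbrev E2 : Type := ℝ × (Fin 2 → ℝ)

/-- Directional derivative along `v`. -/
noncomputable def Dv (v : E2) (f : E2 → ℝ) (p : E2) : ℝ := fderiv ℝ f p v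

lemma contDiff_Dv {f : E2 → ℝ} (hf : ContDiff ℝ (⊤ : ℕ∞) f) (v : E2) :
    ContDiff ℝ (⊤ : ℕ∞) (Dv v f) :=
  (hf.fderiv_right (by simp)).clm_apply contDiff_const

lemma Dv_symm {f : E2 → ℝ} (hf : ContDiff ℝ (⊤ : ℕ∞) f) (v w p : E2) :
    Dv w (Dv v f) p = Dv v (Dv w f) p := by
  have hsymm : IsSymmSndFDerivAt ℝ f p :=
    hf.contDiffAt.isSymmSndFDerivAt (by rw [minSmoothness_of_isRCLikeNormedField]; exact WithTop.coe_le_coe.mpr (le_top : (2 : ℕ∞) ≤ ⊤))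
  have hd : DifferentiableAt ℝ (fderiv ℝ f) p :=
    ((hf.fderiv_right (m := (⊤ : ℕ∞)) (by simp)).differentiable (by simp)) p
  have key : ∀ u : E2, fderiv ℝ (fun q => fderiv ℝ f q u) p =
      (fderiv ℝ (fderiv ℝ f) p).flip u := by
    intro u
    have := fderiv_clm_apply (c := fderiv ℝ f) (u := fun _ : E2 => u) hd
      (differentiableAt_const u)
    simpa using this
  show fderiv ℝ (fun q => fderiv ℝ f q v) p w = fderiv ℝ (fun q => fderiv ℝ f q w) p v
  rw [key v, key w]
  simp only [ContinuousLinearMap.flip_apply]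
  exact hsymm.eq w v

lemma Dv_neg (v : E2) (f : E2 → ℝ) (q : E2) : Dv v (fun p => -f p) q = -Dv v f q := by
  simp [Dv, fderiv_neg]

lemma Dv_sum (v : E2) (f : Fin 2 → E2 → ℝ) (q : E2)
    (hf : ∀ j, DifferentiableAt ℝ (f j) q) :
    Dv v (fun p => ∑ j : Fin 2, f j p) q = ∑ j : Fin 2, Dv v (f j) q := by
  simp only [Dv]
  rw [fderiv_fun_sum (fun j _ => hf j)]
  simp

lemma px_eq (f : E2 → ℝ) (j : Fin 2) (t : ℝ) (x : Fin 2 → ℝ)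
    (hf : DifferentiableAt ℝ f (t, x)) :
    px j (fun s y => f (s, y)) t x = Dv ((0 : ℝ), Pi.single j 1) f (t, x) := by
  have hins : HasFDerivAt (fun y : Fin 2 → ℝ => ((t, y) : E2))
      (ContinuousLinearMap.inr ℝ ℝ (Fin 2 → ℝ)) x := hasFDerivAt_prodMk_right t x
  have hcomp := (hf.hasFDerivAt.comp x hins)
  have : fderiv ℝ (fun y => f (t, y)) x =
      (fderiv ℝ f (t, x)).comp (ContinuousLinearMap.inr ℝ ℝ (Fin 2 → ℝ)) :=
    hcomp.fderiv
  simp only [px, Dv, this, ContinuousLinearMap.comp_apply, ContinuousLinearMap.inr_apply]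

lemma pt_eq (f : E2 → ℝ) (t : ℝ) (x : Fin 2 → ℝ)
    (hf : DifferentiableAt ℝ f (t, x)) :
    pt (fun s y => f (s, y)) t x = Dv ((1 : ℝ), (0 : Fin 2 → ℝ)) f (t, x) := by
  have hins : HasFDerivAt (fun s : ℝ => ((s, x) : E2))
      (ContinuousLinearMap.inl ℝ ℝ (Fin 2 → ℝ)) t := hasFDerivAt_prodMk_left t x
  have hcomp := (hf.hasFDerivAt.comp t hins).hasDerivAt
  have hcomp' : HasDerivAt (fun s : ℝ => f (s, x))
      (((fderiv ℝ f (t, x)).comp (ContinuousLinearMap.inl ℝ ℝ (Fin 2 → ℝ))) 1) t := hcomp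
  simp only [pt, hcomp'.deriv, Dv, ContinuousLinearMap.comp_apply,
    ContinuousLinearMap.inl_apply]

end PiolaAux

/-- Propagation of the 2D Piola identities: for smooth fields `F` (invertible 2×2
matrices), `H = ĥ/|det F|` with `ĥ > 0`, and velocity `U`, evolving by
`∂ₜ(H F^i_α) + ∂_j(H U^j F^i_α − H F^j_α U^i) = 0` and `∂ₜH + ∂_j(H U^j) = 0`,
if `∂_i(H F^i_α) = 0` at `t = 0` then it holds for all `t ≥ 0`. -/
theorem stmt_17 (hhat : ℝ) (hpos : 0 < hhat)
    (H : ℝ → (Fin 2 → ℝ) → ℝ) (U : ℝ → (Fin 2 → ℝ) → (Fin 2 → ℝ))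
    (F : ℝ → (Fin 2 → ℝ) → Matrix (Fin 2) (Fin 2) ℝ)
    (hHsmooth : ContDiff ℝ (⊤ : ℕ∞) (fun p : ℝ × (Fin 2 → ℝ) => H p.1 p.2))
    (hUsmooth : ∀ i, ContDiff ℝ (⊤ : ℕ∞) (fun p : ℝ × (Fin 2 → ℝ) => U p.1 p.2 i))
    (hFsmooth : ∀ i α, ContDiff ℝ (⊤ : ℕ∞) (fun p : ℝ × (Fin 2 → ℝ) => F p.1 p.2 i α))
    (hFinv : ∀ t x, (F t x).det ≠ 0)
    (hH : ∀ t x, H t x = hhat / |(F t x).det|)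
    (hevolF : ∀ t x (i α : Fin 2),
      pt (fun s y => H s y * F s y i α) t x +
        ∑ j : Fin 2, px j (fun s y =>
          H s y * U s y j * F s y i α - H s y * F s y j α * U s y i) t x = 0)
    (hmass : ∀ t x,
      pt H t x + ∑ j : Fin 2, px j (fun s y => H s y * U s y j) t x = 0)
    (hPiola0 : ∀ x (α : Fin 2),
      ∑ i : Fin 2, px i (fun s y => H s y * F s y i α) 0 x = 0) :
    ∀ t, 0 ≤ t → ∀ x (α : Fin 2),
      ∑ i : Fin 2, px i (fun s y => H s y * F s y i α) t x = 0 := by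
  intro t _ x α
  -- the fields as functions on space-time
  set g : Fin 2 → E2 → ℝ := fun i p => H p.1 p.2 * F p.1 p.2 i α with hg_def
  set G : Fin 2 → Fin 2 → E2 → ℝ := fun j i p =>
    H p.1 p.2 * U p.1 p.2 j * F p.1 p.2 i α - H p.1 p.2 * F p.1 p.2 j α * U p.1 p.2 i
    with hG_def
  have hg : ∀ i, ContDiff ℝ (⊤ : ℕ∞) (g i) := fun i => hHsmooth.mul (hFsmooth i α)
  have hG : ∀ j i, ContDiff ℝ (⊤ : ℕ∞) (G j i) := fun j i =>
    ((hHsmooth.mul (hUsmooth j)).mul (hFsmooth i α)).sub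
      ((hHsmooth.mul (hFsmooth j α)).mul (hUsmooth i))
  set et : E2 := ((1 : ℝ), (0 : Fin 2 → ℝ)) with het_def
  set e : Fin 2 → E2 := fun j => ((0 : ℝ), Pi.single j 1) with he_def
  -- the Piola quantity as a function on space-time
  set φ : E2 → ℝ := fun p => ∑ i : Fin 2, Dv (e i) (g i) p with hφ_def
  have hφsmooth : ContDiff ℝ (⊤ : ℕ∞) φ := ContDiff.sum fun i _ => contDiff_Dv (hg i) (e i)
  -- identification with the sum of `px` terms
  have hident : ∀ s y, ∑ i : Fin 2, px i (fun s y => H s y * F s y i α) s y = φ (s, y) := by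
    intro s y
    refine Finset.sum_congr rfl fun i _ => ?_
    exact px_eq (g i) i s y ((hg i).differentiable (by simp) _)
  -- the evolution equation in directional-derivative form
  have hevol' : ∀ i, Dv et (g i) = fun p => -∑ j : Fin 2, Dv (e j) (G j i) p := by
    intro i
    funext p
    obtain ⟨s, y⟩ := p
    have h1 : pt (fun s y => H s y * F s y i α) s y = Dv et (g i) (s, y) :=
      pt_eq (g i) s y ((hg i).differentiable (by simp) _)
    have h2 : ∀ j, px j (fun s y =>
        H s y * U s y j * F s y i α - H s y * F s y j α * U s y i) s y
        = Dv (e j) (G j i) (s, y) := fun j =>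
      px_eq (G j i) j s y ((hG j i).differentiable (by simp) _)
    have := hevolF s y i α
    rw [h1] at this
    simp only [h2] at this
    linarith [this, Finset.sum_apply (a := ((s, y) : E2))
      (g := fun j => Dv (e j) (G j i)) (s := Finset.univ)]
  -- antisymmetry of G
  have hGanti : ∀ j i, G j i = fun p => -(G i j p) := by
    intro j i
    funext p
    simp only [hG_def]
    ring
  -- time derivative of φ along the slice is zero
  have hderiv : ∀ s : ℝ, HasDerivAt (fun r => φ (r, x)) 0 s := by
    intro s
    have hc : HasDerivAt (fun r : ℝ => ((r, x) : E2)) et s := by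
      rw [het_def]; exact (hasDerivAt_id s).prodMk (hasDerivAt_const s x)
    have hD := ((hφsmooth.differentiable (by simp)) (s, x)).hasFDerivAt.comp_hasDerivAt s hc
    have hzero : fderiv ℝ φ (s, x) et = 0 := by
      have hsum : fderiv ℝ φ (s, x) et = ∑ i : Fin 2, Dv et (Dv (e i) (g i)) (s, x) := by
        have hdiff : ∀ i ∈ (Finset.univ : Finset (Fin 2)),
            DifferentiableAt ℝ (Dv (e i) (g i)) (s, x) := fun i _ =>
          ((contDiff_Dv (hg i) (e i)).differentiable (by simp)) _
        rw [hφ_def]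
        rw [fderiv_fun_sum hdiff]
        simp [Dv]
      rw [hsum]
      have hstep : ∀ i, Dv et (Dv (e i) (g i)) (s, x)
          = -∑ j : Fin 2, Dv (e i) (Dv (e j) (G j i)) (s, x) := by
        intro i
        rw [Dv_symm (hg i) (e i) et (s, x), hevol' i]
        have h3 : Dv (e i) (fun p => -∑ j : Fin 2, Dv (e j) (G j i) p) (s, x)
            = -Dv (e i) (fun p => ∑ j : Fin 2, Dv (e j) (G j i) p) (s, x) :=
          Dv_neg _ _ _
        have h4 : Dv (e i) (fun p => ∑ j : Fin 2, Dv (e j) (G j i) p) (s, x)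
            = ∑ j : Fin 2, Dv (e i) (Dv (e j) (G j i)) (s, x) :=
          Dv_sum _ _ _ (fun j => ((contDiff_Dv (hG j i) (e j)).differentiable (by simp)) _)
        rw [h3, h4]
      have hanti : ∀ i j, Dv (e i) (Dv (e j) (G j i)) (s, x)
          = -Dv (e j) (Dv (e i) (G i j)) (s, x) := by
        intro i j
        have h1 : ∀ q, Dv (e j) (G j i) q = -Dv (e j) (G i j) q := by
          intro q
          rw [hGanti j i]
          exact Dv_neg _ _ _
        rw [show Dv (e j) (G j i) = fun q => -Dv (e j) (G i j) q from funext h1]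
        rw [Dv_neg (e i) (Dv (e j) (G i j)) (s, x)]
        rw [Dv_symm (hG i j) (e j) (e i) (s, x)]
      rw [Fin.sum_univ_two, hstep 0, hstep 1,
        Fin.sum_univ_two, Fin.sum_univ_two]
      linarith [hanti 0 0, hanti 0 1, hanti 1 1]
    rw [hzero] at hD
    exact hD
  -- constancy in time
  have hdiffble : Differentiable ℝ (fun r => φ (r, x)) := fun s => (hderiv s).differentiableAt
  have hconst : φ (t, x) = φ (0, x) :=
    is_const_of_deriv_eq_zero hdiffble (fun s => (hderiv s).deriv) t 0
  rw [hident t x, hconst, ← hident 0 x]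
  exact hPiola0 x α
end
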